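/- Let R be a commutative ring, c,d ∈ ℤ, and let A be a ℤ-graded R-module with (c,d)-graded Frobenius data (μ,η,ν,ε) satisfying the signed relations (i)–(v). Set p := ε∘μ : A⊗A → 𝟙 (of degree c−d) and q := (−1)^{cd+c(c+1)/2+d(d+1)/2} ν∘η : 𝟙 → A⊗A (of degree d−c). Then (id_A⊗p)∘(q⊗id_A) = id_A, where tensor products of graded maps follow the Koszul convention; in particular the pairing p admits a copairing and is nondegenerate. -/

import Mathlib

/-! # A framework for ℤ-graded modules with Koszul sign conventions -/

noncomputable section
open scoped TensorProduct DirectSum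

/-- The sign `(−1)^z` for an integer `z` (depends only on the parity of `z`),
as an element of the ring `R`. -/
def gsign (R : Type) [CommRing R] (z : ℤ) : R := (-1 : R) ^ z.natAbs

/-- A ℤ-graded `R`-module: a family of `R`-modules indexed by `ℤ`. -/
structure GradedModule (R : Type) [CommRing R] where
  piece : ℤ → Type
  [acg : ∀ i, AddCommGroup (piece i)]
  [mod : ∀ i, Module R (piece i)]

attribute [instance 2000] GradedModule.acg GradedModule.mod

variable {R : Type} [CommRing R]

/-- Transport along an equality of degrees. -/
def GradedModule.pcast (A : GradedModule R) {i j : ℤ} (h : i = j) :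
    A.piece i →ₗ[R] A.piece j where
  toFun a := h ▸ a
  map_add' a b := by subst h; rfl
  map_smul' r a := by subst h; rfl

/-- The tensor product of graded modules: `(A ⊗ B)_k = ⊕_{p+q=k} A_p ⊗ B_q`. -/
def GradedModule.tensor (A B : GradedModule R) : GradedModule R where
  piece k := ⨁ p : ℤ, (A.piece p ⊗[R] B.piece (k - p))

/-- The unit object: `R` concentrated in degree `0`. -/
def gUnit (R : Type) [CommRing R] : GradedModule R where
  piece k := ↥(if k = 0 then (⊤ : Submodule R R) else ⊥)

/-- A graded map of degree `deg`: a family of `R`-linear maps `A_i → B_{i+deg}`. -/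
structure GMap (A B : GradedModule R) where
  deg : ℤ
  app : ∀ i, A.piece i →ₗ[R] B.piece (i + deg)

namespace GMap

/-- The identity graded map (degree `0`). -/
protected def id (A : GradedModule R) : GMap A A :=
  ⟨0, fun i => A.pcast (by ring)⟩

/-- Composition of graded maps (maps act from the left; `g.comp f = g ∘ f`). -/
def comp {A B C : GradedModule R} (g : GMap B C) (f : GMap A B) : GMap A C :=
  ⟨f.deg + g.deg, fun i =>
    (C.pcast (by ring)).comp ((g.app (i + f.deg)).comp (f.app i))⟩

/-- Scalar multiplication of a graded map. -/
instance {A B : GradedModule R} : SMul R (GMap A B) :=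
  ⟨fun r f => ⟨f.deg, fun i => r • f.app i⟩⟩

/-- Re-present a graded map with an equal degree expression. -/
def reindex {A B : GradedModule R} (f : GMap A B) (n : ℤ) (h : f.deg = n) : GMap A B :=
  ⟨n, fun i => (B.pcast (by rw [h])).comp (f.app i)⟩

/-- The Koszul-signed tensor product of graded maps:
`(f ⊗ g)(a ⊗ b) = (−1)^{|g|·|a|} f(a) ⊗ g(b)`. -/
def tmul {A A' B B' : GradedModule R} (f : GMap A A') (g : GMap B B') :
    GMap (A.tensor B) (A'.tensor B') :=
  ⟨f.deg + g.deg, fun k =>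
    DirectSum.toModule R ℤ _ fun p =>
      (DirectSum.lof R ℤ
          (fun q => A'.piece q ⊗[R] B'.piece (k + (f.deg + g.deg) - q)) (p + f.deg)).comp
        (gsign R (g.deg * p) •
          (TensorProduct.map (f.app p)
            ((B'.pcast (show (k - p) + g.deg = k + (f.deg + g.deg) - (p + f.deg) by ring)).comp
              (g.app (k - p)))))⟩

end GMap

/-- The Koszul twist `τ : A ⊗ B → B ⊗ A`, `τ(a ⊗ b) = (−1)^{|a||b|} b ⊗ a`. -/
def twistG (A B : GradedModule R) : GMap (A.tensor B) (B.tensor A) :=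
  ⟨0, fun k =>
    DirectSum.toModule R ℤ _ fun p =>
      (DirectSum.lof R ℤ (fun q => B.piece q ⊗[R] A.piece (k + 0 - q)) (k - p)).comp
        (gsign R (p * (k - p)) •
          ((LinearMap.lTensor (B.piece (k - p)) (A.pcast (show p = k + 0 - (k - p) by ring))).comp
            (TensorProduct.comm R (A.piece p) (B.piece (k - p))).toLinearMap))⟩

/-- The associator `(A ⊗ B) ⊗ C → A ⊗ (B ⊗ C)` (no signs). -/
def assocG (A B C : GradedModule R) :
    GMap ((A.tensor B).tensor C) (A.tensor (B.tensor C)) :=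
  ⟨0, fun k =>
    DirectSum.toModule R ℤ _ fun p =>
      (DirectSum.toModule R ℤ _ fun q =>
        (DirectSum.lof R ℤ (fun q' => A.piece q' ⊗[R] (B.tensor C).piece (k + 0 - q')) q).comp
          ((LinearMap.lTensor (A.piece q)
            ((DirectSum.lof R ℤ (fun s => B.piece s ⊗[R] C.piece ((k + 0 - q) - s)) (p - q)).comp
              (LinearMap.lTensor (B.piece (p - q))
                (C.pcast (show k - p = (k + 0 - q) - (p - q) by ring))))).comp
            (TensorProduct.assoc R (A.piece q) (B.piece (p - q)) (C.piece (k - p))).toLinearMap)).comp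
        (TensorProduct.directSumLeft R R (fun q => A.piece q ⊗[R] B.piece (p - q))
          (C.piece (k - p))).toLinearMap⟩

/-- The inverse associator `A ⊗ (B ⊗ C) → (A ⊗ B) ⊗ C` (no signs). -/
def assocInvG (A B C : GradedModule R) :
    GMap (A.tensor (B.tensor C)) ((A.tensor B).tensor C) :=
  ⟨0, fun k =>
    DirectSum.toModule R ℤ _ fun p =>
      (DirectSum.toModule R ℤ _ fun s =>
        (DirectSum.lof R ℤ
            (fun q' => (A.tensor B).piece q' ⊗[R] C.piece (k + 0 - q')) (p + s)).comp
          ((TensorProduct.map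
              ((DirectSum.lof R ℤ (fun q => A.piece q ⊗[R] B.piece ((p + s) - q)) p).comp
                (LinearMap.lTensor (A.piece p) (B.pcast (show s = (p + s) - p by ring))))
              (C.pcast (show (k - p) - s = k + 0 - (p + s) by ring))).comp
            (TensorProduct.assoc R (A.piece p) (B.piece s)
              (C.piece ((k - p) - s))).symm.toLinearMap)).comp
        (TensorProduct.directSumRight R R (A.piece p)
          (fun s => B.piece s ⊗[R] C.piece ((k - p) - s))).toLinearMap⟩

/-- The left unitor `𝟙 ⊗ A → A`. -/
def lunitor (A : GradedModule R) : GMap ((gUnit R).tensor A) A :=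
  ⟨0, fun k =>
    DirectSum.toModule R ℤ _ fun p =>
      if h : p = 0 then
        TensorProduct.lift
          ((LinearMap.toSpanSingleton R (A.piece (k - p) →ₗ[R] A.piece (k + 0))
              (A.pcast (by omega))).comp
            (Submodule.subtype (if p = 0 then (⊤ : Submodule R R) else ⊥)))
      else 0⟩

/-- The right unitor `A ⊗ 𝟙 → A`. -/
def runitor (A : GradedModule R) : GMap (A.tensor (gUnit R)) A :=
  ⟨0, fun k =>
    DirectSum.toModule R ℤ _ fun p =>
      if h : k - p = 0 then
        TensorProduct.lift
          (((LinearMap.toSpanSingleton R (A.piece p →ₗ[R] A.piece (k + 0))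
              (A.pcast (by omega))).comp
            (Submodule.subtype (if k - p = 0 then (⊤ : Submodule R R) else ⊥))).flip)
      else 0⟩

/-- The inverse left unitor `A → 𝟙 ⊗ A`. -/
def lunitorInv (A : GradedModule R) : GMap A ((gUnit R).tensor A) :=
  ⟨0, fun k =>
    (DirectSum.lof R ℤ (fun p => (gUnit R).piece p ⊗[R] A.piece (k + 0 - p)) 0).comp
      (((TensorProduct.mk R ((gUnit R).piece 0) (A.piece (k + 0 - 0))) ⟨1, by simp⟩).comp
        (A.pcast (by ring)))⟩

/-- The inverse right unitor `A → A ⊗ 𝟙`. -/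
def runitorInv (A : GradedModule R) : GMap A (A.tensor (gUnit R)) :=
  ⟨0, fun k =>
    (DirectSum.lof R ℤ (fun p => A.piece p ⊗[R] (gUnit R).piece (k + 0 - p)) k).comp
      ((TensorProduct.mk R (A.piece k) ((gUnit R).piece (k + 0 - k))).flip
        ⟨1, by simp⟩)⟩


/-- The underlying element of `R` of an element of a piece of the unit object. -/
def unitVal {R : Type} [CommRing R] (k : ℤ) : (gUnit R).piece k →ₗ[R] R :=
  Submodule.subtype _
section FrobeniusRelations

variable {R : Type} [CommRing R]

/-- (i) graded associativity: `μ∘(μ⊗id) = (−1)^c μ∘(id⊗μ)` (under the associator). -/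
def relAssoc (c : ℤ) {A : GradedModule R} (μ : GMap (A.tensor A) A) : Prop :=
  μ.comp (μ.tmul (GMap.id A)) =
    gsign R c • ((μ.comp ((GMap.id A).tmul μ)).comp (assocG A A A))

/-- (ii) graded unitality: `(−1)^c μ∘(η⊗id) = (−1)^{c(c−1)/2} id = μ∘(id⊗η)`
(under the unitors). -/
def relUnit (c : ℤ) {A : GradedModule R} (μ : GMap (A.tensor A) A)
    (η : GMap (gUnit R) A) : Prop :=
  gsign R c • ((μ.comp (η.tmul (GMap.id A))).comp (lunitorInv A)) =
      gsign R (c * (c - 1) / 2) • GMap.id A ∧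
  (μ.comp ((GMap.id A).tmul η)).comp (runitorInv A) =
      gsign R (c * (c - 1) / 2) • GMap.id A

/-- (iii) graded coassociativity: `(id⊗ν)∘ν = (−1)^d (ν⊗id)∘ν` (under the associator). -/
def relCoassoc (d : ℤ) {A : GradedModule R} (ν : GMap A (A.tensor A)) : Prop :=
  ((GMap.id A).tmul ν).comp ν =
    gsign R d • ((assocG A A A).comp ((ν.tmul (GMap.id A)).comp ν))

/-- (iv) graded counitality: `(−1)^d (id⊗ε)∘ν = (−1)^{d(d−1)/2} id = (ε⊗id)∘ν`
(under the unitors). -/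
def relCounit (d : ℤ) {A : GradedModule R} (ν : GMap A (A.tensor A))
    (ε : GMap A (gUnit R)) : Prop :=
  gsign R d • ((runitor A).comp (((GMap.id A).tmul ε).comp ν)) =
      gsign R (d * (d - 1) / 2) • GMap.id A ∧
  (lunitor A).comp ((ε.tmul (GMap.id A)).comp ν) =
      gsign R (d * (d - 1) / 2) • GMap.id A

/-- (v) graded Frobenius relation:
`(μ⊗id)∘(id⊗ν) = (−1)^{cd} ν∘μ = (id⊗μ)∘(ν⊗id)` (under the associators). -/
def relFrob (c d : ℤ) {A : GradedModule R} (μ : GMap (A.tensor A) A)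
    (ν : GMap A (A.tensor A)) : Prop :=
  (μ.tmul (GMap.id A)).comp ((assocInvG A A A).comp ((GMap.id A).tmul ν)) =
      gsign R (c * d) • (ν.comp μ) ∧
  ((GMap.id A).tmul μ).comp ((assocG A A A).comp (ν.tmul (GMap.id A))) =
      gsign R (c * d) • (ν.comp μ)

/-- (vi) graded commutativity: `μ∘τ = (−1)^c μ`. -/
def relComm (c : ℤ) {A : GradedModule R} (μ : GMap (A.tensor A) A) : Prop :=
  μ.comp (twistG A A) = gsign R c • μ

/-- (vi') graded symmetry: `ε∘μ∘τ = (−1)^c ε∘μ`. -/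
def relSymm (c : ℤ) {A : GradedModule R} (μ : GMap (A.tensor A) A)
    (ε : GMap A (gUnit R)) : Prop :=
  (ε.comp μ).comp (twistG A A) = gsign R c • (ε.comp μ)

/-- Unsigned unitality `μ∘(η⊗id) = id = μ∘(id⊗η)` (under the unitors). -/
def relUnit₀ {A : GradedModule R} (μ : GMap (A.tensor A) A)
    (η : GMap (gUnit R) A) : Prop :=
  (μ.comp (η.tmul (GMap.id A))).comp (lunitorInv A) = GMap.id A ∧
  (μ.comp ((GMap.id A).tmul η)).comp (runitorInv A) = GMap.id A

/-- Unsigned counitality `(id⊗ε)∘ν = id = (ε⊗id)∘ν` (under the unitors). -/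
def relCounit₀ {A : GradedModule R} (ν : GMap A (A.tensor A))
    (ε : GMap A (gUnit R)) : Prop :=
  (runitor A).comp (((GMap.id A).tmul ε).comp ν) = GMap.id A ∧
  (lunitor A).comp ((ε.tmul (GMap.id A)).comp ν) = GMap.id A

/-- Unsigned Frobenius relation `(μ⊗id)∘(id⊗ν) = ν∘μ = (id⊗μ)∘(ν⊗id)`
(under the associators). -/
def relFrob₀ {A : GradedModule R} (μ : GMap (A.tensor A) A)
    (ν : GMap A (A.tensor A)) : Prop :=
  (μ.tmul (GMap.id A)).comp ((assocInvG A A A).comp ((GMap.id A).tmul ν)) = ν.comp μ ∧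
  ((GMap.id A).tmul μ).comp ((assocG A A A).comp (ν.tmul (GMap.id A))) = ν.comp μ

/-- The zig-zag (duality) identities for a pairing `p : A⊗A → 𝟙` and a
copairing `q : 𝟙 → A⊗A`:
`(p⊗id)∘(id⊗q) = id = (id⊗p)∘(q⊗id)` (under the associators and unitors). -/
def relZigZag {A : GradedModule R} (p : GMap (A.tensor A) (gUnit R))
    (q : GMap (gUnit R) (A.tensor A)) : Prop :=
  (lunitor A).comp ((p.tmul (GMap.id A)).comp ((assocInvG A A A).comp
      (((GMap.id A).tmul q).comp (runitorInv A)))) = GMap.id A ∧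
  (runitor A).comp (((GMap.id A).tmul p).comp ((assocG A A A).comp
      ((q.tmul (GMap.id A)).comp (lunitorInv A)))) = GMap.id A

end FrobeniusRelations

/-! Functoriality of the Koszul tensor product against identities rewrites the zig-zag as
`ρ ∘ (id ⊗ ε) ∘ [(id ⊗ μ) ∘ α ∘ (ν ⊗ id)] ∘ (η ⊗ id) ∘ λ⁻¹` (α the associator, ρ and λ the
unitors), up to the sign of `q`. The Frobenius relation turns the bracket into
`(−1)^{cd} ν ∘ μ`, which splits the composite into the counit composite `ρ ∘ (id ⊗ ε) ∘ ν` and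
the unit composite `μ ∘ (η ⊗ id) ∘ λ⁻¹`; by (ii) and (iv) these are `(−1)^{c + c(c−1)/2} id`
and `(−1)^{d + d(d−1)/2} id`. Since `c(c+1)/2 = c(c−1)/2 + c`, the total sign exponent is
even. -/

-- Elements of pieces of propositionally equal degrees are compared by `HEq`, which makes
-- every `pcast` transparent.
namespace GradedModule

lemma pcast_eq_iff_heq (A : GradedModule R) {i j : ℤ} (h : i = j) (x : A.piece i)
    (y : A.piece j) : A.pcast h x = y ↔ HEq x y := by
  subst h; exact heq_iff_eq.symm

lemma pcast_heq (A : GradedModule R) {i j : ℤ} (h : i = j) (x : A.piece i) :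
    HEq (A.pcast h x) x := by
  subst h; rfl

lemma smul_lof_tmul_heq (A B : GradedModule R) {k k' j j' : ℤ} (hk : k = k') (hj : j = j')
    {r r' : R} (hr : r = r') {x : A.piece j} {x' : A.piece j'} {y : B.piece (k - j)}
    {y' : B.piece (k' - j')} (hx : HEq x x') (hy : HEq y y') :
    HEq (r • DirectSum.lof R ℤ (fun q => A.piece q ⊗[R] B.piece (k - q)) j (x ⊗ₜ y))
      (r' • DirectSum.lof R ℤ (fun q => A.piece q ⊗[R] B.piece (k' - q)) j' (x' ⊗ₜ y')) := by
  subst hk hj hr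
  rw [eq_of_heq hx, eq_of_heq hy]

end GradedModule

lemma Int.mul_add_one_ediv_two (z : ℤ) : z * (z + 1) / 2 = z * (z - 1) / 2 + z := by
  rw [show z * (z + 1) = z * (z - 1) + z * 2 by ring, Int.add_mul_ediv_right _ _ two_ne_zero]

lemma gsign_eq_ite (z : ℤ) : gsign R z = if Even z then 1 else -1 := by
  rcases Int.even_or_odd z with h | h
  · rw [if_pos h]; exact (Int.natAbs_even.mpr h).neg_one_pow
  · rw [if_neg (Int.not_even_iff_odd.mpr h)]; exact (Int.natAbs_odd.mpr h).neg_one_pow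

lemma gsign_of_even {z : ℤ} (h : Even z) : gsign R z = 1 := by
  rw [gsign_eq_ite, if_pos h]

lemma gsign_add (a b : ℤ) : gsign R (a + b) = gsign R a * gsign R b := by
  simp only [gsign_eq_ite, Int.even_add]
  by_cases ha : Even a <;> by_cases hb : Even b <;> simp [ha, hb]

namespace GMap

open GradedModule

variable {A B C D : GradedModule R}

@[simp] lemma comp_deg (g : GMap B C) (f : GMap A B) : (g.comp f).deg = f.deg + g.deg := rfl

@[simp] lemma id_deg (A : GradedModule R) : (GMap.id A).deg = 0 := rfl

@[simp] lemma tmul_deg {A' B' : GradedModule R} (f : GMap A A') (g : GMap B B') :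
    (f.tmul g).deg = f.deg + g.deg := rfl

@[simp] lemma smul_app (r : R) (f : GMap A B) (i : ℤ) (x : A.piece i) :
    (r • f).app i x = r • f.app i x := rfl

@[simp] lemma comp_app (g : GMap B C) (f : GMap A B) (i : ℤ) (x : A.piece i) :
    (g.comp f).app i x =
      C.pcast (show i + f.deg + g.deg = i + (f.deg + g.deg) by ring)
        (g.app (i + f.deg) (f.app i x)) := rfl

lemma app_heq_app (f : GMap A B) {i j : ℤ} (h : i = j) {x : A.piece i} {y : A.piece j}
    (hxy : HEq x y) : HEq (f.app i x) (f.app j y) := by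
  subst h; rw [eq_of_heq hxy]

lemma ext {f g : GMap A B} (hdeg : f.deg = g.deg)
    (happ : ∀ i (x : A.piece i), HEq (f.app i x) (g.app i x)) : f = g := by
  obtain ⟨df, af⟩ := f
  obtain ⟨dg, ag⟩ := g
  obtain rfl : df = dg := hdeg
  congr
  funext i
  exact LinearMap.ext fun x => eq_of_heq (happ i x)

instance : MulAction R (GMap A B) where
  one_smul f := ext rfl fun i x => heq_of_eq (one_smul R (f.app i x))
  mul_smul r s f := ext rfl fun i x => heq_of_eq (mul_smul r s (f.app i x))

lemma smul_comp (r : R) (g : GMap B C) (f : GMap A B) : (r • g).comp f = r • g.comp f :=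
  ext rfl fun _ _ => heq_of_eq (map_smul (C.pcast _) r _)

lemma comp_smul (g : GMap B C) (r : R) (f : GMap A B) : g.comp (r • f) = r • g.comp f :=
  ext rfl fun i x => heq_of_eq (by simp only [comp_app, smul_app, map_smul]; rfl)

lemma comp_app_heq (g : GMap B C) (f : GMap A B) (i : ℤ) (x : A.piece i) :
    HEq ((g.comp f).app i x) (g.app (i + f.deg) (f.app i x)) :=
  pcast_heq _ _ _

lemma id_app_heq (A : GradedModule R) (i : ℤ) (x : A.piece i) :
    HEq ((GMap.id A).app i x) x :=
  pcast_heq _ _ _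

lemma comp_assoc (h : GMap C D) (g : GMap B C) (f : GMap A B) :
    (h.comp g).comp f = h.comp (g.comp f) :=
  ext (by simp only [comp_deg]; ring) fun i x =>
    (comp_app_heq _ _ _ _).trans <| (comp_app_heq _ _ _ _).trans <|
      (h.app_heq_app (by simp only [comp_deg]; ring) (comp_app_heq g f i x).symm).trans
        (comp_app_heq _ _ _ _).symm

lemma comp_id (f : GMap A B) : f.comp (GMap.id A) = f :=
  ext (by simp) fun i x =>
    (comp_app_heq _ _ _ _).trans (f.app_heq_app (by simp) (id_app_heq A i x))

variable {A' B' Z : GradedModule R}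

lemma tmul_app_lof (f : GMap A A') (g : GMap B B') (k p : ℤ) (x : A.piece p)
    (y : B.piece (k - p)) :
    (f.tmul g).app k (DirectSum.lof R ℤ (fun q => A.piece q ⊗[R] B.piece (k - q)) p (x ⊗ₜ y)) =
      gsign R (g.deg * p) •
        DirectSum.lof R ℤ (fun q => A'.piece q ⊗[R] B'.piece (k + (f.deg + g.deg) - q))
          (p + f.deg) (f.app p x ⊗ₜ B'.pcast (by ring) (g.app (k - p) y)) := by
  erw [DirectSum.toModule_lof]
  exact map_smul (DirectSum.lof R ℤ
    (fun q => A'.piece q ⊗[R] B'.piece (k + (f.deg + g.deg) - q)) (p + f.deg))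
    (gsign R (g.deg * p)) (f.app p x ⊗ₜ B'.pcast (by ring) (g.app (k - p) y))

lemma ext_tensor {f g : GMap (A.tensor B) Z} (hdeg : f.deg = g.deg)
    (happ : ∀ (k p : ℤ) (x : A.piece p) (y : B.piece (k - p)),
      HEq (f.app k (DirectSum.lof R ℤ (fun q => A.piece q ⊗[R] B.piece (k - q)) p (x ⊗ₜ y)))
        (g.app k (DirectSum.lof R ℤ (fun q => A.piece q ⊗[R] B.piece (k - q)) p (x ⊗ₜ y)))) :
    f = g :=
  ext hdeg fun k v => by
    have hk : (Z.pcast (by rw [hdeg] : k + f.deg = k + g.deg)).comp (f.app k) = g.app k :=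
      DirectSum.linearMap_ext R fun p => TensorProduct.ext' fun x y =>
        (pcast_eq_iff_heq _ _ _ _).mpr (happ k p x y)
    exact (pcast_eq_iff_heq _ _ _ _).mp (LinearMap.congr_fun hk v)

lemma smul_tmul (r : R) (f : GMap A A') (g : GMap B B') : (r • f).tmul g = r • f.tmul g :=
  ext_tensor rfl fun k p x y => heq_of_eq <| by
    change _ = r • (f.tmul g).app k _
    rw [tmul_app_lof, tmul_app_lof, smul_app, ← TensorProduct.smul_tmul', map_smul, smul_comm]
    rfl

lemma comp_tmul_id (f : GMap A B) (g : GMap B C) (D : GradedModule R) :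
    (g.comp f).tmul (GMap.id D) = (g.tmul (GMap.id D)).comp (f.tmul (GMap.id D)) :=
  ext_tensor (by simp only [comp_deg, tmul_deg, id_deg]; ring) fun k p x y => by
    refine HEq.trans ?_ (comp_app_heq _ _ _ _).symm
    rw [tmul_app_lof, tmul_app_lof]
    erw [map_smul, tmul_app_lof, smul_smul, ← gsign_add]
    have hy : ∀ {j} (h : k - p + 0 = j), HEq (D.pcast h ((GMap.id D).app (k - p) y)) y :=
      fun _ => (pcast_heq _ _ _).trans (id_app_heq _ _ _)
    refine smul_lof_tmul_heq C D ?_ ?_ (by simp only [id_deg, zero_mul, add_zero])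
      (comp_app_heq g f p x)
      ((hy _).trans ((pcast_heq _ _ _).trans ((id_app_heq _ _ _).trans (hy _))).symm)
    all_goals simp only [comp_deg, tmul_deg, id_deg]; ring

lemma id_tmul_comp (D : GradedModule R) (f : GMap A B) (g : GMap B C) :
    (GMap.id D).tmul (g.comp f) = ((GMap.id D).tmul g).comp ((GMap.id D).tmul f) :=
  ext_tensor (by simp only [comp_deg, tmul_deg, id_deg]; ring) fun k p x y => by
    refine HEq.trans ?_ (comp_app_heq _ _ _ _).symm
    rw [tmul_app_lof, tmul_app_lof]
    erw [map_smul, tmul_app_lof, smul_smul, ← gsign_add]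
    refine smul_lof_tmul_heq D C ?_ ?_ (by simp only [comp_deg, id_deg, add_zero, add_mul])
      ((id_app_heq D p x).trans ((id_app_heq _ _ _).trans (id_app_heq _ _ _)).symm)
      ((pcast_heq _ _ _).trans ((comp_app_heq _ _ _ _).trans
        ((pcast_heq _ _ _).trans (g.app_heq_app ?_ (pcast_heq _ _ _))).symm))
    all_goals simp only [comp_deg, tmul_deg, id_deg]; ring

end GMap

lemma GMap.eq_gsign_smul_of_gsign_smul_eq {A B : GradedModule R} {f g : GMap A B} {a b : ℤ}
    (h : gsign R a • f = gsign R b • g) : f = gsign R (a + b) • g := calc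
  f = gsign R (a + a) • f := by rw [gsign_of_even ⟨a, rfl⟩, one_smul]
  _ = gsign R (a + b) • g := by rw [gsign_add, mul_smul, h, smul_smul, gsign_add]

section Frobenius

variable {A : GradedModule R} {μ : GMap (A.tensor A) A} {η : GMap (gUnit R) A}
  {ν : GMap A (A.tensor A)} {ε : GMap A (gUnit R)}

lemma relUnit.left_unit {c : ℤ} (h : relUnit c μ η) :
    (μ.comp (η.tmul (GMap.id A))).comp (lunitorInv A) =
      gsign R (c + c * (c - 1) / 2) • GMap.id A :=
  GMap.eq_gsign_smul_of_gsign_smul_eq h.1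

lemma relCounit.right_counit {d : ℤ} (h : relCounit d ν ε) :
    (runitor A).comp (((GMap.id A).tmul ε).comp ν) =
      gsign R (d + d * (d - 1) / 2) • GMap.id A :=
  GMap.eq_gsign_smul_of_gsign_smul_eq h.1

lemma zigzag_eq_smul_of_frobenius {r : R}
    (h : ((GMap.id A).tmul μ).comp ((assocG A A A).comp (ν.tmul (GMap.id A))) = r • ν.comp μ) :
    (runitor A).comp (((GMap.id A).tmul (ε.comp μ)).comp ((assocG A A A).comp
      (((ν.comp η).tmul (GMap.id A)).comp (lunitorInv A)))) =
      r • ((runitor A).comp (((GMap.id A).tmul ε).comp ν)).comp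
        ((μ.comp (η.tmul (GMap.id A))).comp (lunitorInv A)) := calc
  _ = (runitor A).comp (((GMap.id A).tmul ε).comp
        ((((GMap.id A).tmul μ).comp ((assocG A A A).comp (ν.tmul (GMap.id A)))).comp
          ((η.tmul (GMap.id A)).comp (lunitorInv A)))) := by
    simp only [GMap.comp_tmul_id, GMap.id_tmul_comp, GMap.comp_assoc]
  _ = _ := by simp only [h, GMap.smul_comp, GMap.comp_smul, GMap.comp_assoc]

end Frobenius

theorem graded_frobenius_copairing_general
    (R : Type) [CommRing R] (c d : ℤ) (A : GradedModule R)
    (μ : GMap (A.tensor A) A) (η : GMap (gUnit R) A)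
    (ν : GMap A (A.tensor A)) (ε : GMap A (gUnit R))
    (h₂ : relUnit c μ η) (h₄ : relCounit d ν ε) (h₅ : relFrob c d μ ν) :
    (runitor A).comp (((GMap.id A).tmul (ε.comp μ)).comp ((assocG A A A).comp
      (((gsign R (c * d + c * (c + 1) / 2 + d * (d + 1) / 2) • (ν.comp η)).tmul
          (GMap.id A)).comp (lunitorInv A)))) = GMap.id A := by
  simp only [GMap.smul_tmul, GMap.smul_comp, GMap.comp_smul]
  rw [zigzag_eq_smul_of_frobenius h₅.2, h₄.right_counit, h₂.left_unit, GMap.smul_comp,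
    GMap.comp_smul, GMap.comp_id]
  simp only [smul_smul, ← gsign_add]
  rw [gsign_of_even, one_smul]
  rw [Int.mul_add_one_ediv_two c, Int.mul_add_one_ediv_two d]
  exact ⟨c * d + c * (c - 1) / 2 + c + d * (d - 1) / 2 + d, by ring⟩

/-- For `(c,d)`-graded Frobenius data satisfying the signed relations
(i)–(v), the pairing `p := ε∘μ` and the copairing
`q := (−1)^{cd + c(c+1)/2 + d(d+1)/2} ν∘η` satisfy `(id⊗p)∘(q⊗id) = id` (with Koszul
signs); in particular `p` admits a copairing and is nondegenerate. -/
theorem graded_frobenius_copairing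
    (R : Type) [CommRing R] (c d : ℤ) (A : GradedModule R)
    (μ : GMap (A.tensor A) A) (η : GMap (gUnit R) A)
    (ν : GMap A (A.tensor A)) (ε : GMap A (gUnit R))
    (hμ : μ.deg = c) (hη : η.deg = -c) (hν : ν.deg = d) (hε : ε.deg = -d)
    (h₁ : relAssoc c μ) (h₂ : relUnit c μ η) (h₃ : relCoassoc d ν)
    (h₄ : relCounit d ν ε) (h₅ : relFrob c d μ ν) :
    (runitor A).comp (((GMap.id A).tmul (ε.comp μ)).comp ((assocG A A A).comp
      (((gsign R (c * d + c * (c + 1) / 2 + d * (d + 1) / 2) • (ν.comp η)).tmul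
          (GMap.id A)).comp (lunitorInv A)))) = GMap.id A :=
  graded_frobenius_copairing_general R c d A μ η ν ε h₂ h₄ h₅
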